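/- Let X and Y be real Hilbert spaces, A, V : X → Y bounded linear operators, G : X → ℝ and F* : Y → ℝ functions, and τ > 0. For x̂ ∈ X and ŷ ∈ Y the following are equivalent: (i) there exist p̂, v̂ ∈ X and q̂, ŵ ∈ Y such that (1/τ)·(p̂ − x̂) is a subgradient of G at x̂, (1/τ)·(q̂ − ŷ) is a subgradient of F* at ŷ, v̂ + τ·V*(ŵ) = 2x̂ − p̂, ŵ − τ·A(v̂) = 2ŷ − q̂, v̂ = x̂ and ŵ = ŷ; (ii) −V*(ŷ) is a subgradient of G at x̂ and A(x̂) is a subgradient of F* at ŷ. -/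

import Mathlib

/-! With `v̂ = x̂` and `ŵ = ŷ`, the two linear equations force `p̂ = x̂ - τ V*ŷ` and
`q̂ = ŷ + τ A x̂`, so the scaled residuals `(1/τ)(p̂ - x̂)` and `(1/τ)(q̂ - ŷ)` are exactly
`-V*ŷ` and `A x̂`. Conversely these choices of `p̂`, `q̂` solve the fixed-point system. -/

open scoped RealInnerProductSpace

/-- `g` is a subgradient of `f` at `x`. -/
def IsSubgradientAt {E : Type*} [NormedAddCommGroup E] [InnerProductSpace ℝ E]
    (f : E → ℝ) (g x : E) : Prop :=
  ∀ z, f x + ⟪g, z - x⟫ ≤ f z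

theorem isSubgradientAt_one_div_smul_add_smul_sub_iff {E : Type*} [NormedAddCommGroup E]
    [InnerProductSpace ℝ E] (f : E → ℝ) {τ : ℝ} (hτ : τ ≠ 0) (x g : E) :
    IsSubgradientAt f ((1 / τ) • (x + τ • g - x)) x ↔ IsSubgradientAt f g x := by
  rw [add_sub_cancel_left, smul_smul, one_div, inv_mul_cancel₀ hτ, one_smul]

theorem pddr_mismatch_fixed_point_characterization
    {X Y : Type*} [NormedAddCommGroup X] [InnerProductSpace ℝ X] [CompleteSpace X]
    [NormedAddCommGroup Y] [InnerProductSpace ℝ Y] [CompleteSpace Y]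
    (A V : X →L[ℝ] Y) (G : X → ℝ) (Fs : Y → ℝ) (τ : ℝ) (hτ : 0 < τ)
    (xh : X) (yh : Y) :
    (∃ (ph vh : X) (qh wh : Y),
        IsSubgradientAt G ((1 / τ) • (ph - xh)) xh ∧
        IsSubgradientAt Fs ((1 / τ) • (qh - yh)) yh ∧
        vh + τ • (ContinuousLinearMap.adjoint V) wh = (2 : ℝ) • xh - ph ∧
        wh - τ • A vh = (2 : ℝ) • yh - qh ∧
        vh = xh ∧ wh = yh) ↔
      (IsSubgradientAt G (-(ContinuousLinearMap.adjoint V) yh) xh ∧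
        IsSubgradientAt Fs (A xh) yh) := by
  have hG := isSubgradientAt_one_div_smul_add_smul_sub_iff G hτ.ne' xh
    (-(ContinuousLinearMap.adjoint V) yh)
  have hF := isSubgradientAt_one_div_smul_add_smul_sub_iff Fs hτ.ne' yh (A xh)
  constructor
  · rintro ⟨ph, vh, qh, wh, hGp, hFq, hp, hq, hv, hw⟩
    rw [hv, hw] at hp hq
    obtain rfl : ph = xh + τ • -(ContinuousLinearMap.adjoint V) yh := by
      linear_combination (norm := module) hp
    obtain rfl : qh = yh + τ • A xh := by linear_combination (norm := module) hq
    exact ⟨hG.1 hGp, hF.1 hFq⟩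
  · rintro ⟨hGx, hFy⟩
    exact ⟨xh + τ • -(ContinuousLinearMap.adjoint V) yh, xh, yh + τ • A xh, yh,
      hG.2 hGx, hF.2 hFy, by module, by module, rfl, rfl⟩
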